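/- arXiv:1611.07451 — 2 statements merged into one kernel-verified Lean document; each statement's English description precedes it below -/
import Mathlib

section
/- If A and B are symmetric positive semidefinite matrices with the same null space and e^{-ε} B ⪯ A ⪯ e^{ε} B, then e^{-ε} B^+ ⪯ A^+ ⪯ e^{ε} B^+. -/
open Matrix

/-- `B` is the Moore–Penrose pseudoinverse of `A`. -/
def IsMoorePenrose {n : Type*} [Fintype n] [DecidableEq n] (A B : Matrix n n ℝ) : Prop :=
  A * B * A = A ∧ B * A * B = B ∧ (A * B)ᵀ = A * B ∧ (B * A)ᵀ = B * A

/-- `A ≈_ε B`, i.e. `e^{-ε} B ⪯ A ⪯ e^{ε} B` in the Loewner order. -/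
def SpecApprox {n : Type*} [Fintype n] (ε : ℝ) (A B : Matrix n n ℝ) : Prop :=
  (A - Real.exp (-ε) • B).PosSemidef ∧ (Real.exp ε • B - A).PosSemidef

/-!
If `C ⪯ c D` and `ker C ⊆ ker D`, then `C⁺ - c⁻¹ D⁺` is a sum of two congruences of
positive semidefinite matrices,
`C⁺ - c⁻¹ D⁺ = Mᵀ C M + c⁻² D⁺ (c D - C) D⁺` with `M = C⁺ - c⁻¹ D⁺`,
so `c⁻¹ D⁺ ⪯ C⁺`. The identity only needs `C⁺ C D⁺ = D⁺ = D⁺ C C⁺`, which is where the kernel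
inclusion enters. Applied to `A ⪯ e^ε B` and to `B ⪯ e^ε A` this gives both halves.
-/

theorem Matrix.mul_eq_zero_of_ker_le {R l m k p : Type*} [CommSemiring R] [Fintype m]
    [Fintype p] {C : Matrix l m R} {D : Matrix k m R} {M : Matrix m p R}
    (hker : ∀ v, C *ᵥ v = 0 → D *ᵥ v = 0) (hCM : C * M = 0) : D * M = 0 := by
  classical
  refine ext_of_mulVec_single fun j => ?_
  rw [← mulVec_mulVec, hker _ (by rw [mulVec_mulVec, hCM, zero_mulVec]), zero_mulVec]

namespace IsMoorePenrose

variable {n : Type*} [Fintype n] [DecidableEq n] {A B C D Cp Dp : Matrix n n ℝ}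

theorem unique (hB : IsMoorePenrose A B) (hC : IsMoorePenrose A C) : B = C := by
  obtain ⟨b1, b2, b3, b4⟩ := hB
  obtain ⟨c1, c2, c3, c4⟩ := hC
  have hAB : A * B = A * C := by
    calc A * B = (A * C) * (A * B) := by rw [← Matrix.mul_assoc, c1]
    _ = (A * C)ᵀ * (A * B)ᵀ := by rw [c3, b3]
    _ = Cᵀ * (A * B * A)ᵀ := by simp only [transpose_mul, Matrix.mul_assoc]
    _ = A * C := by rw [b1, ← transpose_mul, c3]
  have hBA : B * A = C * A := by
    calc B * A = (B * A) * (C * A) := by rw [Matrix.mul_assoc, ← Matrix.mul_assoc A, c1]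
    _ = (B * A)ᵀ * (C * A)ᵀ := by rw [b4, c4]
    _ = (A * B * A)ᵀ * Cᵀ := by simp only [transpose_mul, Matrix.mul_assoc]
    _ = C * A := by rw [b1, ← transpose_mul, c4]
  calc B = B * (A * B) := by rw [← Matrix.mul_assoc, b2]
  _ = (C * A) * C := by rw [hAB, ← Matrix.mul_assoc, hBA]
  _ = C := c2

theorem transpose (h : IsMoorePenrose A B) : IsMoorePenrose Aᵀ Bᵀ := by
  obtain ⟨h1, h2, h3, h4⟩ := h
  refine ⟨?_, ?_, ?_, ?_⟩
  · rw [← transpose_mul, ← transpose_mul, ← Matrix.mul_assoc, h1]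
  · rw [← transpose_mul, ← transpose_mul, ← Matrix.mul_assoc, h2]
  · rw [← transpose_mul, transpose_transpose, h4]
  · rw [← transpose_mul, transpose_transpose, h3]

theorem transpose_eq (hA : Aᵀ = A) (h : IsMoorePenrose A B) : Bᵀ = B :=
  (hA ▸ h.transpose).unique h

theorem mul_comm (hA : Aᵀ = A) (h : IsMoorePenrose A B) : A * B = B * A := by
  rw [← h.2.2.1, transpose_mul, hA, h.transpose_eq hA]

theorem mul_mul_eq_of_ker_le (hD : Dᵀ = D) (hCp : IsMoorePenrose C Cp)
    (hDp : IsMoorePenrose D Dp) (hker : ∀ v, C *ᵥ v = 0 → D *ᵥ v = 0) :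
    Dp * (Cp * C) = Dp := by
  have hDCpC : D * (Cp * C) = D := by
    have h := mul_eq_zero_of_ker_le (M := 1 - Cp * C) hker
      (by rw [Matrix.mul_sub, ← Matrix.mul_assoc, hCp.1, Matrix.mul_one, sub_self])
    rwa [Matrix.mul_sub, Matrix.mul_one, sub_eq_zero, eq_comm] at h
  have hDp_eq : Dp = Dp * Dp * D := by
    rw [Matrix.mul_assoc, ← hDp.mul_comm hD, ← Matrix.mul_assoc, hDp.2.1]
  rw [hDp_eq, Matrix.mul_assoc _ D, hDCpC]

theorem posSemidef_sub_inv_smul {c : ℝ} (hc : c ≠ 0) (hC : C.PosSemidef) (hD : Dᵀ = D)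
    (hker : ∀ v, C *ᵥ v = 0 → D *ᵥ v = 0) (hle : (c • D - C).PosSemidef)
    (hCp : IsMoorePenrose C Cp) (hDp : IsMoorePenrose D Dp) :
    (Cp - c⁻¹ • Dp).PosSemidef := by
  have hCt : Cᵀ = C := by simpa [IsHermitian] using hC.1
  have hCpt := hCp.transpose_eq hCt
  have hDpt := hDp.transpose_eq hD
  have hDpCCp : Dp * (C * Cp) = Dp := by
    rw [hCp.mul_comm hCt, mul_mul_eq_of_ker_le hD hCp hDp hker]
  have hCpCDp : Cp * (C * Dp) = Dp := by
    simpa [transpose_mul, hCpt, hDpt, hCt, Matrix.mul_assoc] using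
      congrArg Matrix.transpose hDpCCp
  have hCpCCp : Cp * (C * Cp) = Cp := by rw [← Matrix.mul_assoc, hCp.2.1]
  have hDpDDp : Dp * (D * Dp) = Dp := by rw [← Matrix.mul_assoc, hDp.2.1]
  have key : Cp - c⁻¹ • Dp = (Cp - c⁻¹ • Dp)ᴴ * C * (Cp - c⁻¹ • Dp)
      + (c⁻¹ ^ 2) • (Dpᴴ * (c • D - C) * Dp) := by
    simp only [conjTranspose_eq_transpose_of_trivial, transpose_sub, transpose_smul, hCpt, hDpt,
      Matrix.sub_mul, Matrix.mul_sub, Matrix.smul_mul, Matrix.mul_smul, Matrix.mul_assoc,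
      hDpCCp, hCpCDp, hCpCCp, hDpDDp]
    match_scalars <;> field_simp <;> ring
  rw [key]
  exact (hC.conjTranspose_mul_mul_same _).add
    ((hle.conjTranspose_mul_mul_same _).smul (sq_nonneg _))

end IsMoorePenrose

theorem stmt8_general {n : Type*} [Fintype n] [DecidableEq n] (ε : ℝ)
    (A B : Matrix n n ℝ) (hA : A.PosSemidef) (hB : B.PosSemidef)
    (hker : ∀ x : n → ℝ, A *ᵥ x = 0 ↔ B *ᵥ x = 0)
    (h : SpecApprox ε A B)
    (Ap : Matrix n n ℝ) (hAp : IsMoorePenrose A Ap)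
    (Bp : Matrix n n ℝ) (hBp : IsMoorePenrose B Bp) :
    SpecApprox ε Ap Bp := by
  have hAt : Aᵀ = A := by simpa [IsHermitian] using hA.1
  have hBt : Bᵀ = B := by simpa [IsHermitian] using hB.1
  have hexp : Real.exp ε ≠ 0 := (Real.exp_pos ε).ne'
  have hBA : (Real.exp ε • A - B).PosSemidef := by
    simpa [smul_sub, smul_smul, ← Real.exp_add] using h.1.smul (Real.exp_pos ε).le
  have hBpAp := hBp.posSemidef_sub_inv_smul hexp hB hAt (fun v => (hker v).mpr) hBA hAp
  constructor
  · simpa [← Real.exp_neg] using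
      hAp.posSemidef_sub_inv_smul hexp hA hBt (fun v => (hker v).mp) h.2 hBp
  · simpa [smul_sub, smul_smul, hexp] using hBpAp.smul (Real.exp_pos ε).le

theorem stmt8 {n : Type*} [Fintype n] [DecidableEq n] (ε : ℝ) (hε : 0 < ε)
    (A B : Matrix n n ℝ) (hA : A.PosSemidef) (hB : B.PosSemidef)
    (hker : ∀ x : n → ℝ, A *ᵥ x = 0 ↔ B *ᵥ x = 0)
    (h : SpecApprox ε A B)
    (Ap : Matrix n n ℝ) (hAp : IsMoorePenrose A Ap)
    (Bp : Matrix n n ℝ) (hBp : IsMoorePenrose B Bp) :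
    SpecApprox ε Ap Bp :=
  stmt8_general ε A B hA hB hker h Ap hAp Bp hBp
end

section
/- For a graph G with vertex partition V₁, V₂, the leverage score of any edge e with both endpoints in V₁ is the same in G as in the graph Schur(G, V₁). -/
open Matrix

/-- The weighted Laplacian of the weight function `w`. -/
def lapW {V : Type*} [Fintype V] [DecidableEq V] (w : V → V → ℝ) : Matrix V V ℝ :=
  Matrix.of fun i j => if i = j then ∑ k, w i k else - w i j

/-- The Schur complement of `L` onto the vertices satisfying `p`, eliminating the rest. -/
noncomputable def schurOn {V : Type*} [Fintype V] [DecidableEq V] (L : Matrix V V ℝ)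
    (p : V → Prop) [DecidablePred p] : Matrix {i // p i} {i // p i} ℝ :=
  L.submatrix (Subtype.val : {i // p i} → V) (Subtype.val : {i // p i} → V) -
    L.submatrix (Subtype.val : {i // p i} → V) (Subtype.val : {i // ¬ p i} → V) *
      (L.submatrix (Subtype.val : {i // ¬ p i} → V) (Subtype.val : {i // ¬ p i} → V))⁻¹ *
      L.submatrix (Subtype.val : {i // ¬ p i} → V) (Subtype.val : {i // p i} → V)

/-!
Write `b = e_u - e_v`. Since the graph is connected, the quadratic form of the Laplacian `L`
vanishes only on constant vectors, all of which are orthogonal to `b`; hence `b = L y` for some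
`y`. For any symmetric `L` and any `L⁺` with `L L⁺ L = L`, this gives
`bᵀ L⁺ b = yᵀ L L⁺ L y = bᵀ y`. Because `b` vanishes on the eliminated vertices, block elimination
shows that the restriction `y₁` of `y` solves the Schur complement system `S y₁ = b₁`, so likewise
`b₁ᵀ S⁺ b₁ = b₁ᵀ y₁ = bᵀ y`.
-/

theorem SimpleGraph.Preconnected.apply_eq_of_forall_adj {V α : Type*} {G : SimpleGraph V}
    (hG : G.Preconnected) {x : V → α} (hx : ∀ i j, G.Adj i j → x i = x j) (i j : V) :
    x i = x j := by
  obtain ⟨W⟩ := hG i j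
  induction W with
  | nil => rfl
  | cons hadj _ ih => exact (hx _ _ hadj).trans ih

namespace Matrix

theorem exists_mulVec_eq_of_forall_dotProduct_eq_zero {n : Type*} [Fintype n] [DecidableEq n]
    (M : Matrix n n ℝ) (b : n → ℝ)
    (h : ∀ x, x ⬝ᵥ M *ᵥ x = 0 → b ⬝ᵥ x = 0) : ∃ y, M *ᵥ y = b := by
  -- `range M = (range M)ᗮᗮ`, and every `x ⊥ range M` satisfies `x ⬝ᵥ M *ᵥ x = 0`.
  have hb : WithLp.toLp 2 b ∈ (LinearMap.range M.toEuclideanLin)ᗮᗮ := by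
    rw [Submodule.mem_orthogonal]
    intro x hx
    rw [Submodule.mem_orthogonal] at hx
    have hxM : x.ofLp ⬝ᵥ M *ᵥ x.ofLp = 0 := by
      simpa [PiLp.inner_apply, dotProduct, mul_comm] using hx _ ⟨x, rfl⟩
    simpa [PiLp.inner_apply, dotProduct, mul_comm] using h _ hxM
  rw [Submodule.orthogonal_orthogonal] at hb
  obtain ⟨y, hy⟩ := hb
  exact ⟨y.ofLp, congrArg WithLp.ofLp hy⟩

theorem dotProduct_mulVec_of_mul_mul_self {n R : Type*} [Fintype n] [CommSemiring R]
    {A B : Matrix n n R} (hA : Aᵀ = A) (hABA : A * B * A = A) {y b : n → R}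
    (hy : A *ᵥ y = b) :
    b ⬝ᵥ B *ᵥ b = b ⬝ᵥ y := by
  have hb : b = y ᵥ* A := by rw [← hy, ← mulVec_transpose, hA]
  calc b ⬝ᵥ B *ᵥ b = b ⬝ᵥ B *ᵥ (A *ᵥ y) := by rw [hy]
    _ = (y ᵥ* (A * B * A)) ⬝ᵥ y := by
      rw [mulVec_mulVec, dotProduct_mulVec, hb, vecMul_vecMul, Matrix.mul_assoc]
    _ = b ⬝ᵥ y := by rw [hABA, hb]

end Matrix

section Schur

variable {V R : Type*} [Fintype V] (p : V → Prop) [DecidablePred p]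

theorem submatrix_mulVec_add_submatrix_mulVec [NonUnitalNonAssocSemiring R] {ι : Type*}
    (L : Matrix V V R) (f : ι → V) (y : V → R) :
    L.submatrix f (Subtype.val : {i // p i} → V) *ᵥ (fun i => y i) +
      L.submatrix f (Subtype.val : {i // ¬ p i} → V) *ᵥ (fun i => y i) =
      fun i => (L *ᵥ y) (f i) := by
  funext i
  exact Fintype.sum_subtype_add_sum_subtype p (fun j => L (f i) j * y j)

theorem dotProduct_subtype_of_forall_not [NonUnitalNonAssocSemiring R] {b : V → R}
    (hb : ∀ i, ¬ p i → b i = 0) (y : V → R) :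
    (fun i : {i // p i} => b i) ⬝ᵥ (fun i : {i // p i} => y i) = b ⬝ᵥ y := by
  rw [dotProduct, dotProduct, ← Fintype.sum_subtype_add_sum_subtype p (fun i => b i * y i),
    Fintype.sum_eq_zero (fun i : {i // ¬ p i} => b i * y i) (fun i => by simp [hb i i.2]),
    add_zero]

variable [DecidableEq V]

theorem schurOn_transpose {L : Matrix V V ℝ} (hL : Lᵀ = L) :
    (schurOn L p)ᵀ = schurOn L p := by
  rw [schurOn, transpose_sub, transpose_mul, transpose_mul, transpose_nonsing_inv]
  simp only [transpose_submatrix, hL, Matrix.mul_assoc]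

theorem schurOn_mulVec_of_mulVec_eq {L : Matrix V V ℝ}
    (hF : IsUnit (L.submatrix (Subtype.val : {i // ¬ p i} → V)
      (Subtype.val : {i // ¬ p i} → V)).det)
    {y b : V → ℝ} (hy : L *ᵥ y = b) (hb : ∀ i, ¬ p i → b i = 0) :
    schurOn L p *ᵥ (fun i : {i // p i} => y i) = fun i : {i // p i} => b i := by
  have hkept := submatrix_mulVec_add_submatrix_mulVec p L (Subtype.val : {i // p i} → V) y
  have helim := submatrix_mulVec_add_submatrix_mulVec p L (Subtype.val : {i // ¬ p i} → V) y
  rw [hy] at hkept helim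
  have helim' : L.submatrix (Subtype.val : {i // ¬ p i} → V) Subtype.val *ᵥ
      (fun i : {i // p i} => y i) =
      -(L.submatrix (Subtype.val : {i // ¬ p i} → V) Subtype.val *ᵥ
        (fun i : {i // ¬ p i} => y i)) := by
    rw [eq_neg_iff_add_eq_zero, helim]
    exact funext fun i => hb i i.2
  rw [schurOn, sub_mulVec, ← mulVec_mulVec, ← mulVec_mulVec, helim', mulVec_neg, mulVec_mulVec,
    nonsing_inv_mul _ hF, one_mulVec, mulVec_neg, sub_neg_eq_add, hkept]

theorem dotProduct_mulVec_eq_schurOn {L : Matrix V V ℝ} (hL : Lᵀ = L)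
    (hF : IsUnit (L.submatrix (Subtype.val : {i // ¬ p i} → V)
      (Subtype.val : {i // ¬ p i} → V)).det)
    {Lp : Matrix V V ℝ} (hLp : L * Lp * L = L)
    {Sp : Matrix {i // p i} {i // p i} ℝ} (hSp : schurOn L p * Sp * schurOn L p = schurOn L p)
    {y b : V → ℝ} (hy : L *ᵥ y = b) (hb : ∀ i, ¬ p i → b i = 0) :
    b ⬝ᵥ Lp *ᵥ b =
      (fun i : {i // p i} => b i) ⬝ᵥ Sp *ᵥ (fun i : {i // p i} => b i) := by
  rw [dotProduct_mulVec_of_mul_mul_self hL hLp hy,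
    dotProduct_mulVec_of_mul_mul_self (schurOn_transpose p hL) hSp
      (schurOn_mulVec_of_mulVec_eq p hF hy hb),
    dotProduct_subtype_of_forall_not p hb]

end Schur

section Laplacian

variable {V : Type*} [Fintype V] [DecidableEq V] {w : V → V → ℝ}

theorem lapW_transpose (hsymm : ∀ i j, w i j = w j i) : (lapW w)ᵀ = lapW w := by
  ext i j
  rcases eq_or_ne i j with rfl | h
  · simp [lapW]
  · simp [lapW, h, Ne.symm h, hsymm i j]

theorem lapW_mulVec_apply (w : V → V → ℝ) (x : V → ℝ) (i : V) :
    (lapW w *ᵥ x) i = ∑ j, w i j * (x i - x j) + w i i * x i := by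
  have hterm : ∀ j, lapW w i j * x j =
      (if i = j then (∑ k, w i k) * x i + w i i * x i else 0) - w i j * x j := by
    intro j
    rcases eq_or_ne i j with rfl | h
    · simp [lapW]
    · simp [lapW, h]
  simp only [mulVec, dotProduct, hterm, Finset.sum_sub_distrib, Finset.sum_ite_eq,
    Finset.mem_univ, if_true, mul_sub, Finset.sum_mul]
  ring

theorem two_mul_dotProduct_lapW_mulVec (hsymm : ∀ i j, w i j = w j i) (x : V → ℝ) :
    2 * (x ⬝ᵥ lapW w *ᵥ x) =
      ∑ i, ∑ j, w i j * (x i - x j) ^ 2 + 2 * ∑ i, w i i * x i ^ 2 := by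
  have hswap :
      ∑ i, ∑ j, w i j * (x j * (x j - x i)) = ∑ i, ∑ j, w i j * (x i * (x i - x j)) := by
    rw [Finset.sum_comm]
    exact Finset.sum_congr rfl fun i _ => Finset.sum_congr rfl fun j _ => by rw [hsymm]
  have hsq : ∑ i, ∑ j, w i j * (x i - x j) ^ 2 =
      ∑ i, ∑ j, w i j * (x i * (x i - x j)) + ∑ i, ∑ j, w i j * (x j * (x j - x i)) := by
    simp only [← Finset.sum_add_distrib]
    exact Finset.sum_congr rfl fun i _ => Finset.sum_congr rfl fun j _ => by ring
  have hquad :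
      x ⬝ᵥ lapW w *ᵥ x = ∑ i, ∑ j, w i j * (x i * (x i - x j)) + ∑ i, w i i * x i ^ 2 := by
    simp only [dotProduct, lapW_mulVec_apply, ← Finset.sum_add_distrib]
    exact Finset.sum_congr rfl fun i _ => by
      rw [mul_add, Finset.mul_sum]
      congr 1
      · exact Finset.sum_congr rfl fun j _ => by ring
      · ring
  rw [hsq, hswap, hquad]
  ring

theorem eq_of_dotProduct_lapW_mulVec_eq_zero (hsymm : ∀ i j, w i j = w j i)
    (hnn : ∀ i j, 0 ≤ w i j) {x : V → ℝ} (hx : x ⬝ᵥ lapW w *ᵥ x = 0) {i j : V}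
    (hw : w i j ≠ 0) : x i = x j := by
  have hedge : ∀ i j, 0 ≤ w i j * (x i - x j) ^ 2 := fun i j =>
    mul_nonneg (hnn i j) (sq_nonneg _)
  have hrow : ∀ i, 0 ≤ ∑ j, w i j * (x i - x j) ^ 2 := fun i =>
    Finset.sum_nonneg fun j _ => hedge i j
  have hloops : 0 ≤ ∑ i, w i i * x i ^ 2 :=
    Finset.sum_nonneg fun i _ => mul_nonneg (hnn i i) (sq_nonneg _)
  have hle : w i j * (x i - x j) ^ 2 ≤ ∑ i, ∑ j, w i j * (x i - x j) ^ 2 :=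
    (Finset.single_le_sum (fun j _ => hedge i j) (Finset.mem_univ j)).trans
      (Finset.single_le_sum (fun i _ => hrow i) (Finset.mem_univ i))
  have hzero : w i j * (x i - x j) ^ 2 = 0 :=
    le_antisymm (by linarith [two_mul_dotProduct_lapW_mulVec hsymm x]) (hedge i j)
  have hsq := (mul_eq_zero.mp hzero).resolve_left hw
  exact sub_eq_zero.mp (pow_eq_zero_iff two_ne_zero |>.mp hsq)

theorem exists_lapW_mulVec_eq_single_sub_single (hsymm : ∀ i j, w i j = w j i)
    (hnn : ∀ i j, 0 ≤ w i j) (hconn : (SimpleGraph.fromRel fun i j => w i j ≠ 0).Connected)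
    (u v : V) : ∃ y, lapW w *ᵥ y = Pi.single u 1 - Pi.single v 1 := by
  refine exists_mulVec_eq_of_forall_dotProduct_eq_zero _ _ fun x hx => ?_
  have hconst : x u = x v := hconn.preconnected.apply_eq_of_forall_adj (fun i j hij => by
    obtain ⟨-, hw | hw⟩ := (SimpleGraph.fromRel_adj _ i j).mp hij
    · exact eq_of_dotProduct_lapW_mulVec_eq_zero hsymm hnn hx hw
    · exact (eq_of_dotProduct_lapW_mulVec_eq_zero hsymm hnn hx hw).symm) u v
  simp [sub_dotProduct, single_dotProduct, hconst]

end Laplacian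

theorem stmt18_general {V : Type*} [Fintype V] [DecidableEq V] (w : V → V → ℝ)
    (hsymm : ∀ i j, w i j = w j i) (hnn : ∀ i j, 0 ≤ w i j)
    (hconn : (SimpleGraph.fromRel fun i j => w i j ≠ 0).Connected)
    (p : V → Prop) [DecidablePred p]
    (hFF : IsUnit ((lapW w).submatrix (Subtype.val : {i // ¬ p i} → V)
      (Subtype.val : {i // ¬ p i} → V)).det)
    (u v : V) (huv : u ≠ v) (hu : p u) (hv : p v)
    (b : V → ℝ) (hb : b = fun i => if i = u then 1 else if i = v then -1 else 0)
    (Lp : Matrix V V ℝ) (hLp : IsMoorePenrose (lapW w) Lp)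
    (Sp : Matrix {i // p i} {i // p i} ℝ) (hSp : IsMoorePenrose (schurOn (lapW w) p) Sp) :
    w u v * (b ⬝ᵥ Lp *ᵥ b) =
      w u v * ((fun i : {i // p i} => b ↑i) ⬝ᵥ Sp *ᵥ (fun i : {i // p i} => b ↑i)) := by
  have hb_single : b = Pi.single u 1 - Pi.single v 1 := by
    subst hb
    funext i
    rcases eq_or_ne i u with rfl | hiu
    · simp [huv]
    · rcases eq_or_ne i v with rfl | hiv <;> simp [*]
  have hb_supp : ∀ i, ¬ p i → b i = 0 := fun i hi => by
    have hiu : i ≠ u := fun h => hi (h ▸ hu)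
    have hiv : i ≠ v := fun h => hi (h ▸ hv)
    simp [hb_single, hiu, hiv]
  obtain ⟨y, hy⟩ := exists_lapW_mulVec_eq_single_sub_single hsymm hnn hconn u v
  rw [dotProduct_mulVec_eq_schurOn p (lapW_transpose hsymm) hFF hLp.1 hSp.1
    (hy.trans hb_single.symm) hb_supp]

theorem stmt18 {V : Type*} [Fintype V] [DecidableEq V] (w : V → V → ℝ)
    (hsymm : ∀ i j, w i j = w j i) (hnn : ∀ i j, 0 ≤ w i j) (hdiag : ∀ i, w i i = 0)
    (hconn : (SimpleGraph.fromRel fun i j => w i j ≠ 0).Connected)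
    (p : V → Prop) [DecidablePred p]
    (hFF : IsUnit ((lapW w).submatrix (Subtype.val : {i // ¬ p i} → V)
      (Subtype.val : {i // ¬ p i} → V)).det)
    (u v : V) (huv : u ≠ v) (hu : p u) (hv : p v)
    (b : V → ℝ) (hb : b = fun i => if i = u then 1 else if i = v then -1 else 0)
    (Lp : Matrix V V ℝ) (hLp : IsMoorePenrose (lapW w) Lp)
    (Sp : Matrix {i // p i} {i // p i} ℝ) (hSp : IsMoorePenrose (schurOn (lapW w) p) Sp) :
    w u v * (b ⬝ᵥ Lp *ᵥ b) =
      w u v * ((fun i : {i // p i} => b ↑i) ⬝ᵥ Sp *ᵥ (fun i : {i // p i} => b ↑i)) :=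
  stmt18_general w hsymm hnn hconn p hFF u v huv hu hv b hb Lp hLp Sp hSp
end
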